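/- arXiv:1711.03185 — 2 statements merged into one kernel-verified Lean document; each statement's English description precedes it below -/
import Mathlib

section
/- With U_j = ⋃_{i : j ∈ σ_i} S_i, for every nonempty σ ⊆ {1, ..., n}: the set (⋂_{j ∈ σ} U_j) \ (⋃_{l ∉ σ} U_l) is nonempty if and only if σ = σ_i for some i ∈ {1, ..., k}. -/
open Set

/-- The points {0, e_1, ..., e_t} in ℝ^d, where e_j = Pi.single (j-1) 1. -/
noncomputable def basisPts (d t : ℕ) : Set (Fin d → ℝ) :=
  insert 0 {x | ∃ m : Fin d, (m : ℕ) < t ∧ x = Pi.single m 1}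

/-- F d t = conv{0, e_1, ..., e_t}. -/
noncomputable def F (d t : ℕ) : Set (Fin d → ℝ) := convexHull ℝ (basisPts d t)

/-- S d i = conv{0, e_1, ..., e_{i-1}} \ conv{0, e_1, ..., e_{i-2}}, with S d 1 = {0}. -/
noncomputable def S (d i : ℕ) : Set (Fin d → ℝ) :=
  F d (i - 1) \ (if i ≤ 1 then ∅ else F d (i - 2))

/-!
The sets `S_i` are pairwise disjoint and nonempty. A point of `S_i` therefore lies in `U_j`
exactly when `j ∈ σ_i`, so it belongs to the atom of `σ` exactly when `σ = σ_i`; and every point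
of a nonempty atom lies in some `S_i`.
-/

open Function

section Codewords

variable {ι α β : Type*} {A : ι → Set α} {σs : ι → Finset β} {U : β → Set α}

theorem mem_iff_mem_codeword (hA : Pairwise (Disjoint on A))
    (hU : ∀ j, U j = ⋃ i, ⋃ (_ : j ∈ σs i), A i) {i : ι} {x : α} (hx : x ∈ A i) (j : β) :
    x ∈ U j ↔ j ∈ σs i := by
  rw [hU]
  simp only [mem_iUnion]
  refine ⟨?_, fun hj => ⟨i, hj, hx⟩⟩
  rintro ⟨i', hj, hx'⟩
  obtain rfl : i' = i := hA.eq (not_disjoint_iff.2 ⟨x, hx', hx⟩)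
  exact hj

theorem atom_eq_iUnion_of_codeword_eq [Fintype β] [DecidableEq β]
    (hA : Pairwise (Disjoint on A)) (hU : ∀ j, U j = ⋃ i, ⋃ (_ : j ∈ σs i), A i)
    {σ : Finset β} (hσ : σ.Nonempty) :
    (⋂ j ∈ σ, U j) \ ⋃ l ∈ σᶜ, U l = ⋃ i, ⋃ (_ : σ = σs i), A i := by
  ext x
  simp only [mem_sdiff, mem_iInter₂, mem_iUnion, Finset.mem_compl, not_exists]
  constructor
  · rintro ⟨hin, hout⟩
    obtain ⟨j₀, hj₀⟩ := hσ
    obtain ⟨i, -, hx⟩ := mem_iUnion₂.1 (hU j₀ ▸ hin j₀ hj₀)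
    have hxU := mem_iff_mem_codeword hA hU hx
    refine ⟨i, Finset.ext fun j => ⟨fun hj => (hxU j).1 (hin j hj), fun hj => ?_⟩, hx⟩
    by_contra hjσ
    exact hout j hjσ ((hxU j).2 hj)
  · rintro ⟨i, rfl, hx⟩
    have hxU := mem_iff_mem_codeword hA hU hx
    exact ⟨fun j hj => (hxU j).2 hj, fun l hl hxl => hl ((hxU l).1 hxl)⟩

end Codewords

section Simplices

variable {d : ℕ}

theorem F_mono {t t' : ℕ} (h : t ≤ t') : F d t ⊆ F d t' := by
  refine convexHull_mono (insert_subset_insert ?_)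
  rintro x ⟨m, hm, rfl⟩
  exact ⟨m, hm.trans_le h, rfl⟩

theorem zero_mem_F (t : ℕ) : (0 : Fin d → ℝ) ∈ F d t :=
  subset_convexHull ℝ _ (mem_insert _ _)

theorem single_mem_F {t : ℕ} (m : Fin d) (hm : (m : ℕ) < t) :
    (Pi.single m 1 : Fin d → ℝ) ∈ F d t :=
  subset_convexHull ℝ _ (mem_insert_of_mem _ ⟨m, hm, rfl⟩)

theorem apply_eq_zero_of_mem_F {t : ℕ} (m : Fin d) (hm : t ≤ (m : ℕ)) {x : Fin d → ℝ}
    (hx : x ∈ F d t) : x m = 0 := by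
  refine convexHull_min ?_ (convex_hyperplane (f := fun y : Fin d → ℝ => y m) ?_ 0) hx
  · rintro y (rfl | ⟨m', hm', rfl⟩)
    · rfl
    · exact Pi.single_eq_of_ne (by rintro rfl; omega) 1
  · exact (LinearMap.proj m).isLinear

theorem S_nonempty {i : ℕ} (h₁ : 1 ≤ i) (h₂ : i ≤ d + 1) : (S d i).Nonempty := by
  rcases h₁.eq_or_lt with rfl | h₁
  · exact ⟨0, zero_mem_F 0, by simp⟩
  · -- `e_{i-1}` lies in `conv{0, e_1, ..., e_{i-1}}` but has a nonzero `(i-1)`-st coordinate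
    let m : Fin d := ⟨i - 2, by omega⟩
    refine ⟨Pi.single m 1, single_mem_F m (by simp [m]; omega), ?_⟩
    rw [if_neg (by omega)]
    intro hmem
    simpa using apply_eq_zero_of_mem_F m le_rfl hmem

theorem disjoint_S_of_lt {a b : ℕ} (ha : 1 ≤ a) (hab : a < b) : Disjoint (S d a) (S d b) := by
  rw [S, S, if_neg (by omega : ¬b ≤ 1)]
  exact disjoint_sdiff_right.mono_left (sdiff_subset.trans (F_mono (by omega)))

theorem pairwise_disjoint_S : Pairwise (Disjoint on fun i : ℕ => S d (i + 1)) := by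
  intro a b hab
  rcases hab.lt_or_gt with h | h
  · exact disjoint_S_of_lt (by omega) (by omega)
  · exact (disjoint_S_of_lt (by omega) (by omega)).symm

end Simplices

theorem atom_nonempty_iff_codeword_general (n k : ℕ) (σs : Fin k → Finset (Fin n))
    (U : Fin n → Set (Fin (k - 1) → ℝ))
    (hU : ∀ j, U j = ⋃ i, ⋃ (_ : j ∈ σs i), S (k - 1) ((i : ℕ) + 1))
    (σ : Finset (Fin n)) (hσ : σ.Nonempty) :
    ((⋂ j ∈ σ, U j) \ ⋃ l ∈ σᶜ, U l).Nonempty ↔ ∃ i, σ = σs i := by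
  have hS : Pairwise (Disjoint on fun i : Fin k => S (k - 1) ((i : ℕ) + 1)) :=
    pairwise_disjoint_S.comp_of_injective Fin.val_injective
  rw [atom_eq_iUnion_of_codeword_eq hS hU hσ]
  simp only [nonempty_iUnion]
  exact exists_congr fun i =>
    ⟨fun ⟨h, _⟩ => h, fun h => ⟨h, S_nonempty (by omega) (by have := i.isLt; omega)⟩⟩

theorem atom_nonempty_iff_codeword (n k : ℕ) (σs : Fin k → Finset (Fin n))
    (hne : ∀ i, (σs i).Nonempty) (hinj : Function.Injective σs)
    (U : Fin n → Set (Fin (k - 1) → ℝ))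
    (hU : ∀ j, U j = ⋃ i, ⋃ (_ : j ∈ σs i), S (k - 1) ((i : ℕ) + 1))
    (σ : Finset (Fin n)) (hσ : σ.Nonempty) :
    ((⋂ j ∈ σ, U j) \ ⋃ l ∈ σᶜ, U l).Nonempty ↔ ∃ i, σ = σs i :=
  atom_nonempty_iff_codeword_general n k σs U hU σ hσ
end

section
/- Each set U_j = ⋃_{i : j ∈ σ_i} S_i is convex in ℝ^{k-1}. -/
/-!
Write `F t = conv{0, e_1, …, e_t}`, so that `S (i + 1) = F i \ F (i - 1)` (and `S 1 = F 0`).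
Each `F (i - 1)` is the face of `F i` on which the coordinate of `e_i` vanishes, hence an extreme
subset. If `x ∈ S (i + 1)` and `y ∈ S (i' + 1)` with `i ≤ i'`, the open segment `(x, y)` lies in
the convex set `F i'`, and it cannot meet the extreme subset `F (i' - 1)`, since that would force
`y ∈ F (i' - 1)`. So the open segment lies in `S (i' + 1)`, and every union of the `S i` is
convex.
-/

open Set

section Layers

variable {𝕜 E : Type*} [Semiring 𝕜] [PartialOrder 𝕜]
  [AddCommGroup E] [Module 𝕜 E]

theorem IsExtreme.openSegment_subset_sdiff {C D : Set E} (hC : Convex 𝕜 C)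
    (hD : IsExtreme 𝕜 C D) {x y : E} (hx : x ∈ C) (hy : y ∈ C \ D) :
    openSegment 𝕜 x y ⊆ C \ D := fun _ hz =>
  ⟨hC.openSegment_subset hx hy.1 hz,
    fun hzD => hy.2 (hD.right_mem_of_mem_openSegment hx hy.1 hzD hz)⟩

/- A segment joining two layers lies, apart from its endpoint in the lower layer, in the higher
one. -/
theorem convex_iUnion_sdiff_of_isExtreme [IsOrderedRing 𝕜] {ι : Type*} [LinearOrder ι]
    {C D : ι → Set E}
    (hC : Monotone C) (hCconv : ∀ i, Convex 𝕜 (C i)) (hD : ∀ i, IsExtreme 𝕜 (C i) (D i))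
    (p : ι → Prop) : Convex 𝕜 (⋃ i, ⋃ (_ : p i), C i \ D i) := by
  refine convex_iff_openSegment_subset.2 fun x hx y hy => ?_
  simp only [mem_iUnion] at hx hy
  obtain ⟨i, hi, hx⟩ := hx
  obtain ⟨i', hi', hy⟩ := hy
  wlog hii' : i ≤ i' generalizing x y i i'
  · rw [openSegment_symm]
    exact this y x i' hi' hy i hi hx (le_of_not_ge hii')
  exact ((hD i').openSegment_subset_sdiff (hCconv i') (hC hii' hx.1) hy).trans
    (subset_biUnion_of_mem (u := fun i => C i \ D i) hi')

end Layers

theorem isExtreme_inter_setOf_forall_eq_zero {ι 𝕜 : Type*} [Field 𝕜] [LinearOrder 𝕜]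
    [IsStrictOrderedRing 𝕜] {A : Set (ι → 𝕜)} (hA : A ⊆ Ici 0) (p : ι → Prop) :
    IsExtreme 𝕜 A (A ∩ {x | ∀ j, p j → x j = 0}) := by
  refine ⟨inter_subset_left, ?_⟩
  rintro x hx y hy _ ⟨-, hz⟩ ⟨a, b, ha, hb, -, rfl⟩
  refine ⟨hx, fun j hj => ?_⟩
  have hzj : a * x j + b * y j = 0 := hz j hj
  have hxj : 0 ≤ x j := hA hx j
  have hyj : 0 ≤ y j := hA hy j
  nlinarith

variable {d : ℕ}

theorem basisPts_mono {t t' : ℕ} (h : t ≤ t') : basisPts d t ⊆ basisPts d t' := by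
  rintro x (rfl | ⟨m, hm, rfl⟩)
  exacts [Or.inl rfl, Or.inr ⟨m, hm.trans_le h, rfl⟩]

theorem F_mono_s7 : Monotone (F d) := fun _ _ h => convexHull_mono (basisPts_mono h)

theorem F_subset_Ici (t : ℕ) : F d t ⊆ Ici (0 : Fin d → ℝ) := by
  refine convexHull_min ?_ (convex_Ici 0)
  rintro x (rfl | ⟨m, -, rfl⟩)
  exacts [mem_Ici.2 le_rfl, mem_Ici.2 (Pi.single_nonneg.2 zero_le_one)]

theorem F_subset_setOf_forall_eq_zero (t : ℕ) :
    F d t ⊆ {x | ∀ j : Fin d, t ≤ (j : ℕ) → x j = 0} := by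
  refine convexHull_min ?_ ?_
  · rintro x (rfl | ⟨m, hm, rfl⟩) j hj
    · rfl
    · exact Pi.single_eq_of_ne (by rintro rfl; omega) _
  · intro u hu v hv a b _ _ _ j hj
    simp [hu j hj, hv j hj]

noncomputable def truncateCoords (t : ℕ) : (Fin d → ℝ) →ₗ[ℝ] (Fin d → ℝ) :=
  LinearMap.mulLeft ℝ fun j => if (j : ℕ) < t then 1 else 0

theorem truncateCoords_image_basisPts (t t' : ℕ) :
    truncateCoords t '' basisPts d t' ⊆ basisPts d t := by
  rintro _ ⟨x, rfl | ⟨m, -, rfl⟩, rfl⟩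
  · left; simp [truncateCoords]
  · by_cases hm : (m : ℕ) < t
    · right
      refine ⟨m, hm, funext fun j => ?_⟩
      by_cases hj : j = m <;> simp [truncateCoords, hj, hm]
    · left
      funext j
      by_cases hj : j = m <;> simp [truncateCoords, hj, hm]

theorem F_eq_inter {t t' : ℕ} (h : t ≤ t') :
    F d t = F d t' ∩ {x | ∀ j : Fin d, t ≤ (j : ℕ) → x j = 0} := by
  refine subset_antisymm (subset_inter (F_mono_s7 h) (F_subset_setOf_forall_eq_zero t)) ?_
  rintro x ⟨hx, hx0⟩
  have hfix : truncateCoords t x = x := funext fun j => by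
    by_cases hj : (j : ℕ) < t
    · simp [truncateCoords, hj]
    · simp [truncateCoords, hj, hx0 j (not_lt.1 hj)]
  rw [← hfix]
  refine convexHull_mono (truncateCoords_image_basisPts t t') ?_
  rw [← LinearMap.image_convexHull]
  exact mem_image_of_mem _ hx

theorem isExtreme_F {t t' : ℕ} (h : t ≤ t') : IsExtreme ℝ (F d t') (F d t) := by
  rw [F_eq_inter h]
  exact isExtreme_inter_setOf_forall_eq_zero (F_subset_Ici t') _

theorem isExtreme_F_sub_one (i : ℕ) :
    IsExtreme ℝ (F d (i - 1)) (if i ≤ 1 then ∅ else F d (i - 2)) := by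
  split_ifs
  · exact ⟨empty_subset _, fun _ _ _ _ _ h => h.elim⟩
  · exact isExtreme_F (by omega)

theorem U_convex (n k : ℕ) (σs : Fin k → Finset (Fin n))
    (U : Fin n → Set (Fin (k - 1) → ℝ))
    (hU : ∀ j, U j = ⋃ i, ⋃ (_ : j ∈ σs i), S (k - 1) ((i : ℕ) + 1))
    (j : Fin n) :
    Convex ℝ (U j) := by
  rw [hU j]
  have hlevel : Monotone fun i : Fin k => (i : ℕ) + 1 - 1 := fun _ _ h => by simpa using h
  exact convex_iUnion_sdiff_of_isExtreme (F_mono_s7.comp hlevel) (fun _ => convex_convexHull ℝ _)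
    (fun i => isExtreme_F_sub_one ((i : ℕ) + 1)) _
end
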